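/- arXiv:2402.10801 — 7 statements merged into one kernel-verified Lean document; each statement's English description precedes it below -/
import Mathlib

section
/- Let f: R^n → R with coordinate-wise Lipschitz constant L_i for ∇_i f, let x ∈ [l,u], γ ≥ 0, and i ∈ {1,…,n}. Then f(x − s·sign(∇_i f(x)) e_i) ≤ f(x) − γ s² for all s with 0 ≤ s ≤ 2|∇_i f(x)| / (L_i + 2γ) such that x − s·sign(∇_i f(x)) e_i ∈ [l,u]. -/
/-!
Along the coordinate segment `t ↦ x + t c eᵢ`, which stays in the convex box, the Lipschitz bound
on `∂ᵢf` gives the quadratic model `f (x + c eᵢ) ≤ f x + c ∂ᵢf(x) + Lᵢ c² / 2`. For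
`c = -s sign(∂ᵢf(x))` the linear term is `-s |∂ᵢf(x)|` and `c² ≤ s²`, so the step-size bound
`s (Lᵢ + 2γ) ≤ 2 |∂ᵢf(x)|` turns the model into `f x - γ s²`.
-/

open scoped RealInnerProductSpace

/-- The box `[l, u]` in `ℝⁿ`. -/
def Box {n : ℕ} (l u : EuclideanSpace ℝ (Fin n)) : Set (EuclideanSpace ℝ (Fin n)) :=
  {y | ∀ j, l j ≤ y j ∧ y j ≤ u j}

open Set

theorem Real.abs_sign_le_one (r : ℝ) : |Real.sign r| ≤ 1 := by
  rcases Real.sign_apply_eq r with h | h | h <;> simp [h]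

theorem Real.sign_mul_self_eq_abs (r : ℝ) : Real.sign r * r = |r| := by
  rcases lt_trichotomy r 0 with h | rfl | h
  · rw [Real.sign_of_neg h, abs_of_neg h, neg_one_mul]
  · simp
  · rw [Real.sign_of_pos h, abs_of_pos h, one_mul]

theorem convex_box {n : ℕ} (l u : EuclideanSpace ℝ (Fin n)) : Convex ℝ (Box l u) := by
  intro y hy z hz a b ha hb hab j
  obtain ⟨hly, hyu⟩ := hy j
  obtain ⟨hlz, hzu⟩ := hz j
  simp only [PiLp.add_apply, PiLp.smul_apply, smul_eq_mul]
  obtain rfl : b = 1 - a := by linarith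
  constructor <;> nlinarith

theorem image_le_of_deriv_sub_le_mul {φ φ' : ℝ → ℝ} {a b L : ℝ} (hab : a ≤ b)
    (hφ : ∀ t ∈ Icc a b, HasDerivAt φ (φ' t) t)
    (hφ' : ∀ t ∈ Icc a b, φ' t - φ' a ≤ L * (t - a)) :
    φ b ≤ φ a + φ' a * (b - a) + L / 2 * (b - a) ^ 2 := by
  set ψ : ℝ → ℝ := fun t ↦ φ t - φ' a * (t - a) - L / 2 * (t - a) ^ 2
  have hψ : ∀ t ∈ Icc a b, HasDerivAt ψ (φ' t - φ' a - L * (t - a)) t := by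
    intro t ht
    have hlin : HasDerivAt (fun t ↦ φ' a * (t - a)) (φ' a) t := by
      simpa using ((hasDerivAt_id t).sub_const a).const_mul (φ' a)
    have hsq : HasDerivAt (fun t ↦ L / 2 * (t - a) ^ 2) (L * (t - a)) t := by
      refine ((((hasDerivAt_id' t).sub_const a).fun_pow 2).const_mul (L / 2)).congr_deriv ?_
      norm_num
      ring
    exact ((hφ t ht).sub hlin).sub hsq
  have hanti : AntitoneOn ψ (Icc a b) := by
    refine antitoneOn_of_deriv_nonpos (convex_Icc a b)
      (fun t ht ↦ (hψ t ht).continuousAt.continuousWithinAt)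
      (fun t ht ↦ (hψ t (interior_subset ht)).differentiableAt.differentiableWithinAt)
      fun t ht ↦ ?_
    rw [(hψ t (interior_subset ht)).deriv]
    linarith [hφ' t (interior_subset ht)]
  have := hanti (left_mem_Icc.mpr hab) (right_mem_Icc.mpr hab) hab
  simp only [ψ, sub_self, mul_zero, sub_zero, ne_eq, OfNat.ofNat_ne_zero, not_false_eq_true,
    zero_pow] at this
  linarith

theorem le_add_inner_add_of_inner_gradient_sub_le {E : Type*} [NormedAddCommGroup E]
    [InnerProductSpace ℝ E] [CompleteSpace E] {f : E → ℝ} {g : E → E} {x v : E} {M : ℝ}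
    (hgrad : ∀ τ ∈ Icc (0 : ℝ) 1, HasGradientAt f (g (x + τ • v)) (x + τ • v))
    (hM : ∀ τ ∈ Icc (0 : ℝ) 1, ⟪g (x + τ • v) - g x, v⟫ ≤ M * τ) :
    f (x + v) ≤ f x + ⟪g x, v⟫ + M / 2 := by
  have hφ : ∀ τ ∈ Icc (0 : ℝ) 1,
      HasDerivAt (fun τ : ℝ ↦ f (x + τ • v)) ⟪g (x + τ • v), v⟫ τ := by
    intro τ hτ
    have hline : HasDerivAt (fun τ : ℝ ↦ x + τ • v) v τ := by
      simpa using ((hasDerivAt_id τ).smul_const v).const_add x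
    have h := (hgrad τ hτ).hasFDerivAt.comp_hasDerivAt τ hline
    rwa [InnerProductSpace.toDual_apply_apply] at h
  have h := image_le_of_deriv_sub_le_mul zero_le_one hφ fun τ hτ ↦ by
    simpa [inner_sub_left] using hM τ hτ
  simpa using h

theorem apply_add_smul_single_le_of_lipschitz_partial {n : ℕ} {f : EuclideanSpace ℝ (Fin n) → ℝ}
    {g : EuclideanSpace ℝ (Fin n) → EuclideanSpace ℝ (Fin n)} {l u x : EuclideanSpace ℝ (Fin n)}
    {i : Fin n} {L c : ℝ} (hgrad : ∀ y ∈ Box l u, HasGradientAt f (g y) y)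
    (hlip : ∀ y : EuclideanSpace ℝ (Fin n), ∀ t : ℝ, y ∈ Box l u →
      y + t • EuclideanSpace.single i (1 : ℝ) ∈ Box l u →
      |g (y + t • EuclideanSpace.single i (1 : ℝ)) i - g y i| ≤ L * |t|)
    (hx : x ∈ Box l u) (hxc : x + c • EuclideanSpace.single i (1 : ℝ) ∈ Box l u) :
    f (x + c • EuclideanSpace.single i (1 : ℝ)) ≤ f x + c * g x i + L / 2 * c ^ 2 := by
  set e := EuclideanSpace.single i (1 : ℝ)
  have hseg : ∀ τ ∈ Icc (0 : ℝ) 1, x + τ • c • e ∈ Box l u := fun τ hτ ↦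
    (convex_box l u).add_smul_mem hx hxc hτ
  have hinner : ∀ w : EuclideanSpace ℝ (Fin n), ⟪w, c • e⟫ = c * w i := fun w ↦ by
    simp [e, real_inner_smul_right, EuclideanSpace.inner_single_right]
  have hcoord : ∀ τ ∈ Icc (0 : ℝ) 1, |g (x + τ • c • e) i - g x i| ≤ L * (τ * |c|) := by
    intro τ hτ
    have h := hlip x _ hx (smul_smul τ c e ▸ hseg τ hτ)
    rwa [← smul_smul, abs_mul, abs_of_nonneg hτ.1] at h
  have h := le_add_inner_add_of_inner_gradient_sub_le (M := L * c ^ 2)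
    (fun τ hτ ↦ hgrad _ (hseg τ hτ)) fun τ hτ ↦ ?_
  · rwa [hinner, mul_div_right_comm] at h
  rw [hinner, PiLp.sub_apply]
  calc c * (g (x + τ • c • e) i - g x i)
      ≤ |c| * |g (x + τ • c • e) i - g x i| := by rw [← abs_mul]; exact le_abs_self _
    _ ≤ |c| * (L * (τ * |c|)) := mul_le_mul_of_nonneg_left (hcoord τ hτ) (abs_nonneg c)
    _ = L * c ^ 2 * τ := by rw [← sq_abs c]; ring

theorem stmt1 {n : ℕ} (f : EuclideanSpace ℝ (Fin n) → ℝ)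
    (g : EuclideanSpace ℝ (Fin n) → EuclideanSpace ℝ (Fin n))
    (l u x : EuclideanSpace ℝ (Fin n)) (i : Fin n) (Li γ : ℝ)
    (hLi : 0 < Li) (hγ : 0 ≤ γ)
    (hgrad : ∀ y ∈ Box l u, HasGradientAt f (g y) y)
    (hlip : ∀ y : EuclideanSpace ℝ (Fin n), ∀ t : ℝ, y ∈ Box l u →
      y + t • EuclideanSpace.single i (1:ℝ) ∈ Box l u →
      |g (y + t • EuclideanSpace.single i (1:ℝ)) i - g y i| ≤ Li * |t|)
    (hx : x ∈ Box l u) (s : ℝ) (hs0 : 0 ≤ s) (hs : s ≤ 2 * |g x i| / (Li + 2 * γ))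
    (hfeas : x - (s * Real.sign (g x i)) • EuclideanSpace.single i (1:ℝ) ∈ Box l u) :
    f (x - (s * Real.sign (g x i)) • EuclideanSpace.single i (1:ℝ)) ≤ f x - γ * s ^ 2 := by
  rw [sub_eq_add_neg, ← neg_smul] at hfeas ⊢
  have hdescent := apply_add_smul_single_le_of_lipschitz_partial hgrad hlip hx hfeas
  rw [neg_mul, mul_assoc, Real.sign_mul_self_eq_abs, neg_sq] at hdescent
  have hsign_sq : (s * Real.sign (g x i)) ^ 2 ≤ s ^ 2 := by
    rw [mul_pow]
    refine mul_le_of_le_one_right (sq_nonneg s) ?_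
    rw [← sq_abs]
    exact pow_le_one₀ (abs_nonneg _) (Real.abs_sign_le_one _)
  have hstep : s * (Li + 2 * γ) ≤ 2 * |g x i| :=
    mul_le_of_le_div₀ (by positivity) (by positivity) hs
  nlinarith [mul_le_mul_of_nonneg_left hstep hs0, mul_le_mul_of_nonneg_left hsign_sq hLi.le]
end

section
/- Let x ∈ [l,u] and ε ≥ 0, with T(x,ε) the ε-tangent cone generated by G = {−e_i : i ∉ I_l(x,ε)} ∪ {e_i : i ∉ I_u(x,ε)} ∪ {0}. If g ∈ R^n and the Euclidean projection of g onto T(x,ε) is nonzero, then there exists d ∈ G with ‖proj_{T(x,ε)}(g)‖ / √n ≤ g·d. -/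
/-!
Since `T(x, ε)` is a cone, the projection `p` of `g` satisfies `‖p‖² ≤ ⟪g, p⟫` (compare `p` with
`t • p` for `t < 1`). Writing `p = ∑ |pᵢ| • sign(pᵢ) eᵢ`, each `sign(pᵢ) eᵢ` lies in `G`, so if
`m` is the largest of the `⟪g, sign(pᵢ) eᵢ⟫` then `‖p‖² ≤ ⟪g, p⟫ ≤ m ∑ |pᵢ| ≤ m √n ‖p‖`.
-/

open scoped RealInnerProductSpace

/-- The generating set `G` of the ε-tangent cone:
`{-e_i : i ∉ I_l(x,ε)} ∪ {e_i : i ∉ I_u(x,ε)} ∪ {0}`. -/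
def GenSet {n : ℕ} (l u x : EuclideanSpace ℝ (Fin n)) (ε : ℝ) :
    Set (EuclideanSpace ℝ (Fin n)) :=
  {v | (∃ i : Fin n, ¬ (x i ≤ l i + ε) ∧ v = -(EuclideanSpace.single i (1:ℝ))) ∨
       (∃ i : Fin n, ¬ (u i - ε ≤ x i) ∧ v = EuclideanSpace.single i (1:ℝ)) ∨ v = 0}

/-- The ε-tangent cone `T(x, ε)`: nonnegative combinations of the generators. -/
def TCone {n : ℕ} (l u x : EuclideanSpace ℝ (Fin n)) (ε : ℝ) :
    Set (EuclideanSpace ℝ (Fin n)) :=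
  {d | ∃ a b : Fin n → ℝ, (∀ j, 0 ≤ a j) ∧ (∀ j, 0 ≤ b j) ∧
    (∀ j, x j ≤ l j + ε → a j = 0) ∧ (∀ j, u j - ε ≤ x j → b j = 0) ∧
    d = ∑ j, (b j - a j) • EuclideanSpace.single j (1:ℝ)}

section Projection

variable {E : Type*} [NormedAddCommGroup E] [InnerProductSpace ℝ E]

theorem norm_sq_le_inner_of_forall_norm_sub_le {g p : E}
    (hmin : ∀ t ∈ Set.Ico (0 : ℝ) 1, ‖g - p‖ ≤ ‖g - t • p‖) : ‖p‖ ^ 2 ≤ ⟪g, p⟫ := by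
  have key : ∀ t ∈ Set.Ico (0 : ℝ) 1, (1 + t) * ‖p‖ ^ 2 ≤ 2 * ⟪g, p⟫ := by
    intro t ht
    have h := pow_le_pow_left₀ (norm_nonneg _) (hmin t ht) 2
    rw [norm_sub_sq_real, norm_sub_sq_real, real_inner_smul_right, norm_smul, mul_pow,
      Real.norm_eq_abs, sq_abs] at h
    refine le_of_mul_le_mul_left ?_ (sub_pos.2 ht.2)
    linear_combination h
  by_contra! hlt
  have hp : 0 < ‖p‖ ^ 2 := by
    rcases eq_or_ne p 0 with rfl | hp
    · simp at hlt
    · positivity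
  set t := max 0 (⟪g, p⟫ / ‖p‖ ^ 2)
  have htp : ⟪g, p⟫ ≤ t * ‖p‖ ^ 2 := (div_le_iff₀ hp).1 (le_max_right _ _)
  have := key t ⟨le_max_left _ _, max_lt one_pos ((div_lt_one hp).2 hlt)⟩
  linarith

end Projection

namespace EuclideanSpace

variable {ι : Type*} [Fintype ι]

theorem sum_smul_single_apply [DecidableEq ι] (c : ι → ℝ) (i : ι) :
    (∑ j, c j • single j (1 : ℝ)) i = c i := by
  simp [Finset.sum_apply, Pi.single_apply]

theorem sum_abs_le_sqrt_card_mul_norm (p : EuclideanSpace ℝ ι) :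
    ∑ i, |p i| ≤ √(Fintype.card ι) * ‖p‖ := by
  rw [norm_eq, ← Real.sqrt_mul (by positivity)]
  apply Real.le_sqrt_of_sq_le
  simpa using sq_sum_le_card_mul_sum_sq (s := Finset.univ) (f := fun i => |p i|)

theorem inner_eq_sum_abs_mul_inner_sign_smul_single [DecidableEq ι]
    (g p : EuclideanSpace ℝ ι) :
    ⟪g, p⟫ = ∑ i, |p i| * ⟪g, (SignType.sign (p i) : ℝ) • single i 1⟫ := by
  simp only [real_inner_smul_right, inner_single_right, conj_trivial,
    ← mul_assoc, abs_mul_sign]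
  simp [PiLp.inner_apply, mul_comm]

theorem exists_norm_div_sqrt_card_le_inner_sign_smul_single [DecidableEq ι]
    {g p : EuclideanSpace ℝ ι} (hp0 : p ≠ 0) (hgp : ‖p‖ ^ 2 ≤ ⟪g, p⟫) :
    ∃ i, ‖p‖ / √(Fintype.card ι) ≤ ⟪g, (SignType.sign (p i) : ℝ) • single i 1⟫ := by
  set d : ι → EuclideanSpace ℝ ι := fun i => (SignType.sign (p i) : ℝ) • single i 1
  have : Nonempty ι := not_isEmpty_iff.1 fun _ => hp0 (Subsingleton.elim _ _)
  obtain ⟨i, -, hi⟩ :=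
    Finset.exists_max_image Finset.univ (fun i => ⟪g, d i⟫) Finset.univ_nonempty
  have hsum : ‖p‖ ^ 2 ≤ (∑ j, |p j|) * ⟪g, d i⟫ := calc
    ‖p‖ ^ 2 ≤ ⟪g, p⟫ := hgp
    _ = ∑ j, |p j| * ⟪g, d j⟫ := inner_eq_sum_abs_mul_inner_sign_smul_single g p
    _ ≤ ∑ j, |p j| * ⟪g, d i⟫ := by gcongr with j; exact hi j (Finset.mem_univ j)
    _ = (∑ j, |p j|) * ⟪g, d i⟫ := (Finset.sum_mul ..).symm
  have hnorm : 0 < ‖p‖ := norm_pos_iff.2 hp0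
  have hdi : 0 < ⟪g, d i⟫ :=
    pos_of_mul_pos_right ((pow_pos hnorm 2).trans_le hsum)
      (Finset.sum_nonneg fun j _ => abs_nonneg _)
  refine ⟨i, div_le_of_le_mul₀ (Real.sqrt_nonneg _) hdi.le (le_of_mul_le_mul_left ?_ hnorm)⟩
  calc ‖p‖ * ‖p‖ = ‖p‖ ^ 2 := (sq _).symm
    _ ≤ (∑ j, |p j|) * ⟪g, d i⟫ := hsum
    _ ≤ (√(Fintype.card ι) * ‖p‖) * ⟪g, d i⟫ := by
      gcongr; exact sum_abs_le_sqrt_card_mul_norm p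
    _ = ‖p‖ * (⟪g, d i⟫ * √(Fintype.card ι)) := by ring

end EuclideanSpace

theorem TCone.smul_mem {n : ℕ} {l u x : EuclideanSpace ℝ (Fin n)} {ε t : ℝ} (ht : 0 ≤ t)
    {p : EuclideanSpace ℝ (Fin n)} (hp : p ∈ TCone l u x ε) : t • p ∈ TCone l u x ε := by
  obtain ⟨a, b, ha, hb, hal, hbu, rfl⟩ := hp
  refine ⟨t • a, t • b, fun j => mul_nonneg ht (ha j), fun j => mul_nonneg ht (hb j),
    fun j hj => by simp [hal j hj], fun j hj => by simp [hbu j hj], ?_⟩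
  simp only [Finset.smul_sum, smul_smul, Pi.smul_apply, smul_eq_mul, mul_sub]

theorem TCone.sign_smul_single_mem_genSet {n : ℕ} {l u x : EuclideanSpace ℝ (Fin n)} {ε : ℝ}
    {p : EuclideanSpace ℝ (Fin n)} (hp : p ∈ TCone l u x ε) (i : Fin n) :
    (SignType.sign (p i) : ℝ) • EuclideanSpace.single i 1 ∈ GenSet l u x ε := by
  obtain ⟨a, b, ha, hb, hal, hbu, rfl⟩ := hp
  rw [EuclideanSpace.sum_smul_single_apply]
  rcases lt_trichotomy (b i - a i) 0 with h | h | h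
  · refine Or.inl ⟨i, fun hi => ?_, by simp [h]⟩
    linarith [hal i hi, hb i]
  · simp [h, GenSet]
  · refine Or.inr (Or.inl ⟨i, fun hi => ?_, by simp [h]⟩)
    linarith [hbu i hi, ha i]

theorem stmt4_general {n : ℕ} (l u x : EuclideanSpace ℝ (Fin n)) (ε : ℝ)
    (g p : EuclideanSpace ℝ (Fin n))
    (hpT : p ∈ TCone l u x ε)
    (hproj : ∀ y ∈ TCone l u x ε, ‖g - p‖ ≤ ‖g - y‖)
    (hp0 : p ≠ 0) :
    ∃ d ∈ GenSet l u x ε, ‖p‖ / Real.sqrt n ≤ ⟪g, d⟫ := by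
  have hgp : ‖p‖ ^ 2 ≤ ⟪g, p⟫ :=
    norm_sq_le_inner_of_forall_norm_sub_le fun t ht => hproj _ (TCone.smul_mem ht.1 hpT)
  obtain ⟨i, hi⟩ := EuclideanSpace.exists_norm_div_sqrt_card_le_inner_sign_smul_single hp0 hgp
  exact ⟨_, TCone.sign_smul_single_mem_genSet hpT i, by simpa using hi⟩

theorem stmt4 {n : ℕ} (l u x : EuclideanSpace ℝ (Fin n)) (ε : ℝ) (hε : 0 ≤ ε)
    (hlu : ∀ j, l j < u j) (hx : ∀ j, l j ≤ x j ∧ x j ≤ u j)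
    (g p : EuclideanSpace ℝ (Fin n))
    (hpT : p ∈ TCone l u x ε)
    (hproj : ∀ y ∈ TCone l u x ε, ‖g - p‖ ≤ ‖g - y‖)
    (hp0 : p ≠ 0) :
    ∃ d ∈ GenSet l u x ε, ‖p‖ / Real.sqrt n ≤ ⟪g, d⟫ :=
  stmt4_general l u x ε g p hpT hproj hp0
end

section
/- Suppose Δ_k ≥ 0 satisfies Σ_{k=0}^∞ Δ_{k+1}² ≤ (Φ_0 − f_min)/c₁, and χ_k ≥ 0 satisfies χ_k ≤ c₂ Δ_{k+1} for all k, with c₁, c₂ > 0. Then for any ε > 0, the cardinality of K_ε = {k : χ_k ≥ ε} is at most ⌊c₂² (Φ_0 − f_min) / (c₁ ε²)⌋. -/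
theorem stmt10 (Δ χ : ℕ → ℝ) (Φ₀ fmin c₁ c₂ ε : ℝ)
    (hc₁ : 0 < c₁) (hc₂ : 0 < c₂) (hε : 0 < ε) (hΦ : fmin ≤ Φ₀)
    (hΔ : ∀ k, 0 ≤ Δ k) (hχ : ∀ k, 0 ≤ χ k)
    (hsum : ∀ m : ℕ, ∑ k ∈ Finset.range m, (Δ (k + 1)) ^ 2 ≤ (Φ₀ - fmin) / c₁)
    (hbound : ∀ k, χ k ≤ c₂ * Δ (k + 1)) :
    {k : ℕ | ε ≤ χ k}.Finite ∧
      {k : ℕ | ε ≤ χ k}.ncard ≤ ⌊c₂ ^ 2 * (Φ₀ - fmin) / (c₁ * ε ^ 2)⌋₊ := by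
  set B : ℝ := c₂ ^ 2 * (Φ₀ - fmin) / (c₁ * ε ^ 2) with hB
  have hBpos : 0 ≤ B := by
    apply div_nonneg
    · apply mul_nonneg (by positivity); linarith
    · positivity
  have key : ∀ S : Finset ℕ, ↑S ⊆ {k : ℕ | ε ≤ χ k} → (S.card : ℝ) ≤ B := by
    intro S hS
    have hsub : S ⊆ Finset.range (if h : S.Nonempty then S.max' h + 1 else 0) := by
      intro x hx
      rw [dif_pos ⟨x, hx⟩]
      exact Finset.mem_range.2 (Nat.lt_succ_of_le (S.le_max' x hx))
    have h1 : ∀ k ∈ S, ε ^ 2 ≤ c₂ ^ 2 * (Δ (k + 1)) ^ 2 := by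
      intro k hk
      have hε' : ε ≤ c₂ * Δ (k + 1) := le_trans (hS hk) (hbound k)
      calc ε ^ 2 ≤ (c₂ * Δ (k + 1)) ^ 2 := by
            apply pow_le_pow_left₀ hε.le hε'
        _ = c₂ ^ 2 * (Δ (k + 1)) ^ 2 := by ring
    have h2 : (S.card : ℝ) * ε ^ 2 ≤ c₂ ^ 2 * ∑ k ∈ S, (Δ (k + 1)) ^ 2 := by
      rw [Finset.mul_sum]
      calc (S.card : ℝ) * ε ^ 2 = ∑ _k ∈ S, ε ^ 2 := by
            rw [Finset.sum_const, nsmul_eq_mul]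
        _ ≤ ∑ k ∈ S, c₂ ^ 2 * (Δ (k + 1)) ^ 2 := Finset.sum_le_sum h1
    have h3 : ∑ k ∈ S, (Δ (k + 1)) ^ 2 ≤ (Φ₀ - fmin) / c₁ := by
      calc ∑ k ∈ S, (Δ (k + 1)) ^ 2
          ≤ ∑ k ∈ Finset.range (if h : S.Nonempty then S.max' h + 1 else 0),
              (Δ (k + 1)) ^ 2 :=
            Finset.sum_le_sum_of_subset_of_nonneg hsub (fun i _ _ => by positivity)
        _ ≤ (Φ₀ - fmin) / c₁ := hsum _
    have h4 : (S.card : ℝ) * ε ^ 2 ≤ c₂ ^ 2 * ((Φ₀ - fmin) / c₁) := by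
      calc (S.card : ℝ) * ε ^ 2 ≤ c₂ ^ 2 * ∑ k ∈ S, (Δ (k + 1)) ^ 2 := h2
        _ ≤ c₂ ^ 2 * ((Φ₀ - fmin) / c₁) := by
            apply mul_le_mul_of_nonneg_left h3 (by positivity)
    rw [hB]
    rw [le_div_iff₀ (by positivity)]
    calc (S.card : ℝ) * (c₁ * ε ^ 2) = ((S.card : ℝ) * ε ^ 2) * c₁ := by ring
      _ ≤ (c₂ ^ 2 * ((Φ₀ - fmin) / c₁)) * c₁ := by
          apply mul_le_mul_of_nonneg_right h4 hc₁.le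
      _ = c₂ ^ 2 * (Φ₀ - fmin) := by field_simp
  have hfin : {k : ℕ | ε ≤ χ k}.Finite := by
    by_contra h
    have hinf : {k : ℕ | ε ≤ χ k}.Infinite := h
    obtain ⟨S, hSsub, hScard⟩ := hinf.exists_subset_card_eq (⌊B⌋₊ + 1)
    have := key S hSsub
    rw [hScard] at this
    have : (⌊B⌋₊ + 1 : ℝ) ≤ B := by exact_mod_cast this
    have := Nat.lt_floor_add_one B
    linarith
  refine ⟨hfin, ?_⟩
  rw [Set.ncard_eq_toFinset_card _ hfin]
  apply Nat.le_floor
  exact key _ (by rw [Set.Finite.coe_toFinset])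
end

section
/- Let γ > 0 and δ ∈ (0,1), and let ν > 0. Suppose f is bounded below on the feasible ray {x + t d : t ≥ 0, x + t d ∈ [l,u]}. Then the extrapolation loop that, starting from α = ν, repeatedly replaces α by ω = min{α/δ, αmax} as long as α < αmax and f(x + ω d) ≤ f(x + α d) − γ(ω − α)², terminates after finitely many steps. -/
/-- The extrapolation loop of the line search terminates: there is no infinite run of
the loop, i.e. no sequence of stepsizes starting at `ν`, updated by
`α ← ω = min {α/δ, αmax}` (where `αmax ∈ [0, +∞]` is the largest feasible stepsize),
along which the test `α < αmax` and the sufficient-decrease condition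
`f(x + ω d) ≤ f(x + α d) − γ (ω − α)²` always hold. -/
theorem stmt11 {n : ℕ} (f : EuclideanSpace ℝ (Fin n) → ℝ)
    (l u x d : EuclideanSpace ℝ (Fin n)) (i : Fin n)
    (hd : d = EuclideanSpace.single i (1:ℝ) ∨ d = -(EuclideanSpace.single i (1:ℝ)))
    (γ δ ν : ℝ) (hγ : 0 < γ) (hδ : δ ∈ Set.Ioo (0:ℝ) 1) (hν : 0 < ν)
    (hx : x ∈ Box l u)
    (αmax : WithTop ℝ)
    (hfeas : ∀ t : ℝ, 0 ≤ t → (x + t • d ∈ Box l u ↔ (t : WithTop ℝ) ≤ αmax))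
    (hbdd : ∃ B : ℝ, ∀ t : ℝ, 0 ≤ t → x + t • d ∈ Box l u → B ≤ f (x + t • d))
    (a : ℕ → ℝ) (ha0 : a 0 = ν)
    (hstep : ∀ j, (αmax = ⊤ ∧ a (j + 1) = a j / δ) ∨
      (∃ m : ℝ, αmax = (m : WithTop ℝ) ∧ a (j + 1) = min (a j / δ) m))
    (hrun : ∀ j, ((a j : WithTop ℝ) < αmax) ∧
      f (x + a (j + 1) • d) ≤ f (x + a j • d) - γ * (a (j + 1) - a j) ^ 2) :
    False := by
  obtain ⟨hδ0, hδ1⟩ := hδ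
  -- In all cases, a (j+1) = a j / δ.
  have hrec : ∀ j, a (j + 1) = a j / δ := by
    intro j
    rcases hstep j with ⟨_, h⟩ | ⟨m, hm, h⟩
    · exact h
    · -- a (j+1) < m from the run condition at j+1, so the min is a j / δ
      have hlt : a (j + 1) < m := by
        have := (hrun (j + 1)).1
        rw [hm] at this
        exact_mod_cast this
      rcases le_or_gt (a j / δ) m with hle | hgt
      · rw [h, min_eq_left hle]
      · exfalso
        rw [h, min_eq_right hgt.le] at hlt
        exact lt_irrefl _ hlt
  -- a j ≥ ν (1/δ)^j ≥ ν > 0, increasing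
  have hνδ : (1:ℝ) < 1/δ := one_lt_one_div hδ0 hδ1
  have hlb : ∀ j, ν * (1/δ)^j ≤ a j := by
    intro j
    induction j with
    | zero => simp [ha0]
    | succ j ih =>
      rw [hrec j, pow_succ]
      have he : ν * ((1/δ)^j * (1/δ)) = (ν * (1/δ)^j) / δ := by field_simp
      rw [he]
      gcongr
  have hpos : ∀ j, ν ≤ a j := by
    intro j
    refine le_trans ?_ (hlb j)
    nlinarith [one_le_pow₀ (n := j) hνδ.le]
  -- Case on αmax
  rcases hstep 0 with ⟨htop, _⟩ | ⟨m, hm, _⟩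
  · -- αmax = ⊤ : sufficient decrease sums to -∞
    obtain ⟨B, hB⟩ := hbdd
    set c : ℝ := ν * (1/δ - 1) with hc
    have hcpos : 0 < c := mul_pos hν (by linarith)
    have hgap : ∀ j, c ≤ a (j+1) - a j := by
      intro j
      rw [hrec j]
      have h1 : a j / δ - a j = a j * (1/δ - 1) := by field_simp
      rw [h1]
      exact mul_le_mul_of_nonneg_right (hpos j) (by linarith) |>.trans_eq rfl
    have hdec : ∀ j, f (x + a (j+1) • d) ≤ f (x + a j • d) - γ * c ^ 2 := by
      intro j
      refine (hrun j).2.trans ?_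
      have : c ^ 2 ≤ (a (j+1) - a j) ^ 2 := by
        apply pow_le_pow_left₀ hcpos.le (hgap j)
      nlinarith
    have hsum : ∀ j : ℕ, f (x + a j • d) ≤ f (x + a 0 • d) - j * (γ * c ^ 2) := by
      intro j
      induction j with
      | zero => simp
      | succ j ih =>
        have := hdec j
        push_cast
        nlinarith
    have hfeas' : ∀ j, B ≤ f (x + a j • d) := by
      intro j
      apply hB _ (le_trans hν.le (hpos j))
      rw [hfeas _ (le_trans hν.le (hpos j)), htop]
      exact le_top
    have hγc : 0 < γ * c ^ 2 := mul_pos hγ (pow_pos hcpos 2)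
    obtain ⟨j, hj⟩ := exists_nat_gt ((f (x + a 0 • d) - B) / (γ * c ^ 2))
    have h1 := hsum j
    have h2 := hfeas' j
    rw [div_lt_iff₀ hγc] at hj
    linarith
  · -- αmax = m finite: a j unbounded but a j < m
    have hub : ∀ j, a j < m := by
      intro j
      have := (hrun j).1
      rw [hm] at this
      exact_mod_cast this
    obtain ⟨j, hj⟩ := pow_unbounded_of_one_lt (m / ν) hνδ
    have := hlb j
    have h2 := hub j
    rw [div_lt_iff₀ hν] at hj
    nlinarith
end

section
/- Let x* be a KKT point of min f over [l,u], i ∈ A⁺(x*) with x*_i = l_i (so ∇_i f(x*) > 0), and let ζ ≤ ∇_i f(x*). Suppose ∇f is L-Lipschitz and z ∈ [l,u] satisfies ‖z − x*‖ ≤ 2ζ/(2L + L_max + 2γ), where L_max ≥ L_i and γ ≥ 0. Then |z_i − l_i| ≤ 2∇_i f(z)/(L_i + 2γ); in particular ∇_i f(z) > 0 when z_i > l_i. -/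
lemma abs_coord_le_norm' {n : ℕ} (v : EuclideanSpace ℝ (Fin n)) (i : Fin n) :
    |v i| ≤ ‖v‖ := by
  rw [EuclideanSpace.norm_eq]
  have h1 : |v i| = Real.sqrt (‖v i‖ ^ 2) := by
    rw [Real.sqrt_sq_eq_abs, abs_norm, Real.norm_eq_abs]
  rw [h1]
  apply Real.sqrt_le_sqrt
  exact Finset.single_le_sum (f := fun j => ‖v j‖ ^ 2)
    (fun j _ => sq_nonneg _) (Finset.mem_univ i)

theorem stmt16 {n : ℕ} (f : EuclideanSpace ℝ (Fin n) → ℝ)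
    (g : EuclideanSpace ℝ (Fin n) → EuclideanSpace ℝ (Fin n))
    (l u xstar z : EuclideanSpace ℝ (Fin n)) (i : Fin n)
    (L Li Lmax γ ζ : ℝ)
    (hL : 0 < L) (hLi : 0 < Li) (hLiLmax : Li ≤ Lmax) (hγ : 0 ≤ γ)
    (hgrad : ∀ y ∈ Box l u, HasGradientAt f (g y) y)
    (hlip : ∀ y ∈ Box l u, ∀ w ∈ Box l u, ‖g y - g w‖ ≤ L * ‖y - w‖)
    (hxstar : xstar ∈ Box l u)
    (hKKT : ∀ j, (xstar j = l j → 0 ≤ g xstar j) ∧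
      (l j < xstar j → xstar j < u j → g xstar j = 0) ∧
      (xstar j = u j → g xstar j ≤ 0))
    (hactive : xstar i = l i) (hstrict : 0 < g xstar i)
    (hζpos : 0 < ζ) (hζ : ζ ≤ g xstar i)
    (hz : z ∈ Box l u) (hnear : ‖z - xstar‖ ≤ 2 * ζ / (2 * L + Lmax + 2 * γ)) :
    |z i - l i| ≤ 2 * g z i / (Li + 2 * γ) ∧ (l i < z i → 0 < g z i) := by
  set D := 2 * L + Lmax + 2 * γ with hD
  have hDpos : 0 < D := by simp only [hD]; linarith
  -- lower bound on g z i
  have hcoord : |g z i - g xstar i| ≤ ‖g z - g xstar‖ := by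
    have := abs_coord_le_norm' (g z - g xstar) i
    simpa [PiLp.sub_apply] using this
  have hgz : ζ - L * (2 * ζ / D) ≤ g z i := by
    have h1 : ‖g z - g xstar‖ ≤ L * ‖z - xstar‖ := hlip z hz xstar hxstar
    have h2 : L * ‖z - xstar‖ ≤ L * (2 * ζ / D) :=
      mul_le_mul_of_nonneg_left hnear hL.le
    have h3 : g xstar i - g z i ≤ |g z i - g xstar i| := by
      rw [abs_sub_comm]; exact le_abs_self _
    linarith
  have hgzlb : ζ * (Lmax + 2 * γ) / D ≤ g z i := by
    have : ζ - L * (2 * ζ / D) = ζ * (Lmax + 2 * γ) / D := by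
      field_simp; ring
    linarith [this ▸ hgz]
  have hgzpos : 0 < g z i := by
    have hnum : 0 < ζ * (Lmax + 2 * γ) := mul_pos hζpos (by linarith)
    have := div_pos hnum hDpos
    linarith
  constructor
  · -- |z i - l i| ≤ ‖z - xstar‖ ≤ 2ζ/D ≤ 2 g z i / (Li + 2γ)
    have hzi : |z i - l i| ≤ ‖z - xstar‖ := by
      have := abs_coord_le_norm' (z - xstar) i
      simpa [PiLp.sub_apply, hactive] using this
    have hchain : |z i - l i| ≤ 2 * ζ / D := hzi.trans hnear
    have hfinal : 2 * ζ / D ≤ 2 * g z i / (Li + 2 * γ) := by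
      rw [div_le_div_iff₀ hDpos (by positivity)]
      have h1 : 2 * ζ * (Li + 2 * γ) ≤ 2 * (ζ * (Lmax + 2 * γ)) := by nlinarith
      have h2 : 2 * (ζ * (Lmax + 2 * γ)) ≤ 2 * g z i * D := by
        have := (div_le_iff₀ hDpos).mp hgzlb
        nlinarith
      linarith
    linarith
  · intro _; exact hgzpos
end

section
/- Let X* be a connected set of KKT points of min f over the box [l,u], with f continuously differentiable and ∇f continuous. Fix an index i and assume no x ∈ X* satisfies x_i ∈ {l_i, u_i} together with ∇_i f(x) = 0 (i.e., no degenerate active index i occurs in X*). If some x* ∈ X* has x*_i ∈ {l_i, u_i} with ∇_i f(x*) ≠ 0, then every x ∈ X* satisfies x_i = x*_i. -/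
theorem stmt17 {n : ℕ} (f : EuclideanSpace ℝ (Fin n) → ℝ)
    (g : EuclideanSpace ℝ (Fin n) → EuclideanSpace ℝ (Fin n))
    (l u : EuclideanSpace ℝ (Fin n)) (Xstar : Set (EuclideanSpace ℝ (Fin n)))
    (hgrad : ∀ y ∈ Box l u, HasGradientAt f (g y) y)
    (hgcont : Continuous g)
    (hsub : Xstar ⊆ Box l u) (hconn : IsConnected Xstar)
    (hKKT : ∀ x ∈ Xstar, ∀ j, (x j = l j → 0 ≤ g x j) ∧
      (l j < x j → x j < u j → g x j = 0) ∧ (x j = u j → g x j ≤ 0))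
    (i : Fin n)
    (hnondeg : ∀ x ∈ Xstar, ¬ ((x i = l i ∨ x i = u i) ∧ g x i = 0))
    (xstar : EuclideanSpace ℝ (Fin n)) (hxstar : xstar ∈ Xstar)
    (hactive : xstar i = l i ∨ xstar i = u i) (hstrict : g xstar i ≠ 0) :
    ∀ x ∈ Xstar, x i = xstar i := by
  have hev : Continuous fun y : EuclideanSpace ℝ (Fin n) => y i :=
    (EuclideanSpace.proj i : EuclideanSpace ℝ (Fin n) →L[ℝ] ℝ).continuous
  have hgi : Continuous fun y => g y i := hev.comp hgcont
  have hpre := hconn.isPreconnected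
  rcases hactive with hl | hu
  · -- case xstar i = l i
    rw [hl]
    set U : Set (EuclideanSpace ℝ (Fin n)) := {y | 0 < g y i} with hUdef
    set V : Set (EuclideanSpace ℝ (Fin n)) := {y | l i < y i} with hVdef
    have hUo : IsOpen U := isOpen_lt continuous_const hgi
    have hVo : IsOpen V := isOpen_lt continuous_const hev
    have hcov : Xstar ⊆ U ∪ V := by
      intro x hx
      rcases eq_or_lt_of_le ((hsub hx) i).1 with h | h
      · left
        have h0 := (hKKT x hx i).1 h.symm
        have hne : g x i ≠ 0 := fun hz => hnondeg x hx ⟨Or.inl h.symm, hz⟩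
        exact lt_of_le_of_ne h0 (Ne.symm hne)
      · right; exact h
    have hempty : ¬ (Xstar ∩ (U ∩ V)).Nonempty := by
      rintro ⟨x, hx, hxU, hxV⟩
      rcases eq_or_lt_of_le ((hsub hx) i).2 with h | h
      · exact absurd ((hKKT x hx i).2.2 h) (not_le.mpr hxU)
      · exact absurd ((hKKT x hx i).2.1 hxV h) (ne_of_gt hxU)
    intro x hx
    by_contra hne
    have hxV : x ∈ V := lt_of_le_of_ne ((hsub hx) i).1 (Ne.symm hne)
    have hxsU : xstar ∈ U := by
      have h0 := (hKKT xstar hxstar i).1 hl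
      exact lt_of_le_of_ne h0 (Ne.symm hstrict)
    exact hempty (hpre U V hUo hVo hcov ⟨xstar, hxstar, hxsU⟩ ⟨x, hx, hxV⟩)
  · -- case xstar i = u i
    rw [hu]
    set U : Set (EuclideanSpace ℝ (Fin n)) := {y | g y i < 0} with hUdef
    set V : Set (EuclideanSpace ℝ (Fin n)) := {y | y i < u i} with hVdef
    have hUo : IsOpen U := isOpen_lt hgi continuous_const
    have hVo : IsOpen V := isOpen_lt hev continuous_const
    have hcov : Xstar ⊆ U ∪ V := by
      intro x hx
      rcases eq_or_lt_of_le ((hsub hx) i).2 with h | h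
      · left
        have h0 := (hKKT x hx i).2.2 h
        have hne : g x i ≠ 0 := fun hz => hnondeg x hx ⟨Or.inr h, hz⟩
        exact lt_of_le_of_ne h0 hne
      · right; exact h
    have hempty : ¬ (Xstar ∩ (U ∩ V)).Nonempty := by
      rintro ⟨x, hx, hxU, hxV⟩
      rcases eq_or_lt_of_le ((hsub hx) i).1 with h | h
      · exact absurd ((hKKT x hx i).1 h.symm) (not_le.mpr hxU)
      · exact absurd ((hKKT x hx i).2.1 h hxV) (ne_of_lt hxU)
    intro x hx
    by_contra hne
    have hxV : x ∈ V := lt_of_le_of_ne ((hsub hx) i).2 hne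
    have hxsU : xstar ∈ U := by
      have h0 := (hKKT xstar hxstar i).2.2 hu
      exact lt_of_le_of_ne h0 hstrict
    exact hempty (hpre U V hUo hVo hcov ⟨xstar, hxstar, hxsU⟩ ⟨x, hx, hxV⟩)
end

section
/- Let X* be a path-connected set of KKT points of min f over [l,u] such that every x ∈ X* is non-degenerate (for every active index i, ∇_i f(x) ≠ 0). Then all points of X* have the same active set and agree on all active components: for x', x'' ∈ X*, A(x') = A(x'') and x'_i = x''_i for all i ∈ A(x'). -/
theorem stmt18 {n : ℕ} (f : EuclideanSpace ℝ (Fin n) → ℝ)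
    (g : EuclideanSpace ℝ (Fin n) → EuclideanSpace ℝ (Fin n))
    (l u : EuclideanSpace ℝ (Fin n)) (Xstar : Set (EuclideanSpace ℝ (Fin n)))
    (hgrad : ∀ y ∈ Box l u, HasGradientAt f (g y) y)
    (hgcont : Continuous g)
    (hsub : Xstar ⊆ Box l u) (hconn : IsPathConnected Xstar)
    (hKKT : ∀ x ∈ Xstar, ∀ j, (x j = l j → 0 ≤ g x j) ∧
      (l j < x j → x j < u j → g x j = 0) ∧ (x j = u j → g x j ≤ 0))
    (hnondeg : ∀ x ∈ Xstar, ∀ i, (x i = l i ∨ x i = u i) → g x i ≠ 0) :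
    ∀ x' ∈ Xstar, ∀ x'' ∈ Xstar,
      (∀ i, (x' i = l i ∨ x' i = u i) ↔ (x'' i = l i ∨ x'' i = u i)) ∧
      (∀ i, (x' i = l i ∨ x' i = u i) → x' i = x'' i) := by
  -- Characterization: at a nondegenerate KKT point, being at the lower (upper)
  -- bound is equivalent to a strictly positive (negative) gradient component.
  have hchar : ∀ x ∈ Xstar, ∀ i,
      (x i = l i ↔ 0 < g x i) ∧ (x i = u i ↔ g x i < 0) := by
    intro x hx i
    obtain ⟨h1, h2, h3⟩ := hKKT x hx i
    have hbox := hsub hx i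
    constructor
    · constructor
      · intro h
        exact lt_of_le_of_ne (h1 h) (Ne.symm (hnondeg x hx i (Or.inl h)))
      · intro h
        by_contra hne
        have hl : l i < x i := lt_of_le_of_ne hbox.1 (fun e => hne e.symm)
        rcases eq_or_lt_of_le hbox.2 with he | hlt
        · exact absurd (h3 he) (not_le.mpr h)
        · exact absurd (h2 hl hlt) (ne_of_gt h)
    · constructor
      · intro h
        exact lt_of_le_of_ne (h3 h) (hnondeg x hx i (Or.inr h))
      · intro h
        by_contra hne
        have hu : x i < u i := lt_of_le_of_ne hbox.2 hne
        rcases eq_or_lt_of_le hbox.1 with he | hlt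
        · exact absurd (h1 he.symm) (not_le.mpr h)
        · exact absurd (h2 hlt hu) (ne_of_lt h)
  intro x' hx' x'' hx''
  obtain ⟨γ, hγ⟩ := hconn.joinedIn x' hx' x'' hx''
  -- coordinate evaluation is continuous on EuclideanSpace
  have hcoord : ∀ i : Fin n, Continuous fun y : EuclideanSpace ℝ (Fin n) => y i :=
    fun i => (EuclideanSpace.proj (𝕜 := ℝ) i).continuous
  have key : ∀ i, (x' i = l i ↔ x'' i = l i) ∧ (x' i = u i ↔ x'' i = u i) := by
    intro i
    have hcγ : Continuous fun t : unitInterval => γ t i :=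
      (hcoord i).comp γ.continuous
    have hcg : Continuous fun t : unitInterval => g (γ t) i :=
      (hcoord i).comp (hgcont.comp γ.continuous)
    -- lower-bound set is clopen
    have hLclopen : IsClopen {t : unitInterval | γ t i = l i} := by
      constructor
      · exact isClosed_eq hcγ continuous_const
      · have : {t : unitInterval | γ t i = l i}
            = {t : unitInterval | 0 < g (γ t) i} := by
          ext t; exact (hchar (γ t) (hγ t) i).1
        rw [this]
        exact isOpen_lt continuous_const hcg
    have hUclopen : IsClopen {t : unitInterval | γ t i = u i} := by
      constructor
      · exact isClosed_eq hcγ continuous_const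
      · have : {t : unitInterval | γ t i = u i}
            = {t : unitInterval | g (γ t) i < 0} := by
          ext t; exact (hchar (γ t) (hγ t) i).2
        rw [this]
        exact isOpen_lt hcg continuous_const
    have hsrc : γ 0 = x' := γ.source
    have htgt : γ 1 = x'' := γ.target
    constructor
    · rcases isClopen_iff.mp hLclopen with h | h
      · constructor
        · intro hc
          exact absurd (show (0 : unitInterval) ∈ {t : unitInterval | γ t i = l i}
            from by simp [hsrc, hc]) (by simp [h])
        · intro hc
          exact absurd (show (1 : unitInterval) ∈ {t : unitInterval | γ t i = l i}
            from by simp [htgt, hc]) (by simp [h])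
      · constructor
        · intro _
          have : (1 : unitInterval) ∈ {t : unitInterval | γ t i = l i} := by
            simp [h]
          simpa [htgt] using this
        · intro _
          have : (0 : unitInterval) ∈ {t : unitInterval | γ t i = l i} := by
            simp [h]
          simpa [hsrc] using this
    · rcases isClopen_iff.mp hUclopen with h | h
      · constructor
        · intro hc
          exact absurd (show (0 : unitInterval) ∈ {t : unitInterval | γ t i = u i}
            from by simp [hsrc, hc]) (by simp [h])
        · intro hc
          exact absurd (show (1 : unitInterval) ∈ {t : unitInterval | γ t i = u i}
            from by simp [htgt, hc]) (by simp [h])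
      · constructor
        · intro _
          have : (1 : unitInterval) ∈ {t : unitInterval | γ t i = u i} := by
            simp [h]
          simpa [htgt] using this
        · intro _
          have : (0 : unitInterval) ∈ {t : unitInterval | γ t i = u i} := by
            simp [h]
          simpa [hsrc] using this
  constructor
  · intro i
    rcases key i with ⟨hL, hU⟩
    constructor
    · rintro (h | h)
      · exact Or.inl (hL.mp h)
      · exact Or.inr (hU.mp h)
    · rintro (h | h)
      · exact Or.inl (hL.mpr h)
      · exact Or.inr (hU.mpr h)
  · intro i hi
    rcases key i with ⟨hL, hU⟩
    rcases hi with h | h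
    · rw [h, (hL.mp h)]
    · rw [h, (hU.mp h)]
end
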